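/- Let Γ̄ be an orbifold group, ρ̄: Γ̄ → Homeo(S¹) a (μ,τ,σ)-representation, and I₀ a periodic gap whose stabilizer is the cyclic subgroup generated by a boundary generator c_i. Let f₀ and g₀ be homeomorphisms of the closure of I₀ coinciding with ρ̄(c_i) on ∂I₀, and suppose there is an orientation-preserving homeomorphism φ₀: I₀ → I₀ with φ₀∘f₀ = g₀∘φ₀ on I₀. Let ρ̄′₁ be a modification of ρ̄ on I₀ by f₀ and ρ̄′₂ a modification of ρ̄ on I₀ by g₀. Then there is a homeomorphism φ of S¹ that extends φ₀, equals the identity on S¹ ∖ 𝔍, and conjugates ρ̄′₁ to ρ̄′₂, i.e. φ∘ρ̄′₁(γ̄) = ρ̄′₂(γ̄)∘φ for every γ̄ ∈ Γ̄. -/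

import Mathlib

open Set Filter Topology

noncomputable section

namespace PAFlow

/-- The circle, realized as `ℝ / ℤ`. -/
abbrev S1 : Type := AddCircle (1 : ℝ)

instance {α : Type*} [TopologicalSpace α] : Group (α ≃ₜ α) where
  mul f g := g.trans f
  one := Homeomorph.refl α
  inv := Homeomorph.symm
  mul_assoc f g h := Homeomorph.ext fun _ => rfl
  one_mul f := Homeomorph.ext fun _ => rfl
  mul_one f := Homeomorph.ext fun _ => rfl
  inv_mul_cancel f := Homeomorph.ext fun x => f.symm_apply_apply x

/-- The canonical representative in `[0,1)` of a point of the circle. -/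
noncomputable def pos1 (x : S1) : ℝ := (AddCircle.equivIco 1 0 x : ℝ)

/-- The open positively-oriented arc from `a` to `c`; when `a = c` it is the complement
of `{a}` (full circle minus the point). -/
def oArc (a c : S1) : Set S1 :=
  if a = c then {a}ᶜ else {b : S1 | 0 < pos1 (b - a) ∧ pos1 (b - a) < pos1 (c - a)}

/-- The closed positively-oriented arc from `a` to `c`; when `a = c` it is the whole circle. -/
def cArc (a c : S1) : Set S1 :=
  if a = c then Set.univ else {b : S1 | pos1 (b - a) ≤ pos1 (c - a)}

/-- A homeomorphism of the circle preserves orientation if it preserves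
(strict) positively-oriented arcs. -/
def OrientPres (f : S1 ≃ₜ S1) : Prop :=
  ∀ a b c : S1, b ∈ oArc a c → f b ∈ oArc (f a) (f c)

/-- A homeomorphism of the circle reverses orientation if it reverses
(strict) positively-oriented arcs. -/
def OrientRev (f : S1 ≃ₜ S1) : Prop :=
  ∀ a b c : S1, b ∈ oArc a c → f b ∈ oArc (f c) (f a)

/-- A gap of `μ` is a connected component of the complement of `μ`. -/
def IsGap (μ : Set S1) (I : Set S1) : Prop :=
  ∃ x ∈ μᶜ, I = connectedComponentIn μᶜ x

/-- The type of gaps of `μ`. -/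
abbrev Gap (μ : Set S1) : Type := {I : Set S1 // IsGap μ I}

/-- The data of the finite-order homeomorphism `τ : μ → μ`, of order `k`, fixed point free,
preserving the cyclic order, and such that the closed arcs `[τ^[i] x, τ^[i+1] x]` cover the
circle while the corresponding open arcs are pairwise disjoint. -/
structure TauData (μ : Set S1) (k : ℕ) : Type where
  τ : S1 → S1
  k_pos : 0 < k
  mapsTo : Set.MapsTo τ μ μ
  bijOn : Set.BijOn τ μ μ
  contOn : ContinuousOn τ μ
  fixfree : ∀ x ∈ μ, τ x ≠ x
  order_k : ∀ x ∈ μ, τ^[k] x = x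
  ordPres : ∀ x ∈ μ, ∀ y ∈ μ, ∀ z ∈ μ, y ∈ oArc x z → τ y ∈ oArc (τ x) (τ z)
  arcCover : ∀ x ∈ μ, (⋃ i ∈ Finset.range k, cArc (τ^[i] x) (τ^[i + 1] x)) = Set.univ
  arcDisj : ∀ x ∈ μ, ∀ i < k, ∀ j < k, i ≠ j →
    Disjoint (oArc (τ^[i] x) (τ^[i + 1] x)) (oArc (τ^[j] x) (τ^[j + 1] x))

/-- `ρ` is a `(μ,τ,σ)`-representation. -/
structure IsMTSRep {Γ : Type*} [Group Γ] (ρ : Γ →* (S1 ≃ₜ S1)) (μ : Set S1) (k : ℕ)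
    (T : TauData μ k) (σg : Γ →* Equiv.Perm (Gap μ)) : Prop where
  perfect : Perfect μ
  nonempty : μ.Nonempty
  invariant : ∀ γ : Γ, (ρ γ) '' μ = μ
  minimal : ∀ ν : Set S1, ν.Nonempty → IsClosed ν → (∀ γ : Γ, (ρ γ) '' ν ⊆ ν) → μ ⊆ ν
  orient : ∀ γ : Γ, OrientPres (ρ γ) ∨ OrientRev (ρ γ)
  commPres : ∀ γ : Γ, OrientPres (ρ γ) → ∀ x ∈ μ, ρ γ (T.τ x) = T.τ (ρ γ x)
  commRev : ∀ γ : Γ, OrientRev (ρ γ) → ∀ x ∈ μ, ρ γ (T.τ x) = (T.τ)^[k - 1] (ρ γ x)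
  gapAct : ∀ (γ : Γ) (I : Gap μ), ((σg γ I : Gap μ) : Set S1) = (ρ γ) '' (I : Set S1)

/-- The stabilizer in `Γ` of a gap `I`, for the action `σg` on gaps. -/
def gapStab {Γ : Type*} [Group Γ] {μ : Set S1} (σg : Γ →* Equiv.Perm (Gap μ)) (I : Gap μ) :
    Subgroup Γ where
  carrier := {γ : Γ | σg γ I = I}
  one_mem' := by simp
  mul_mem' := by
    intro x y hx hy
    have hx' : σg x I = I := hx
    have hy' : σg y I = I := hy
    show σg (x * y) I = I
    rw [map_mul, Equiv.Perm.mul_apply, hy', hx']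
  inv_mem' := by
    intro x hx
    have hx' : σg x I = I := hx
    show σg x⁻¹ I = I
    have h : σg x⁻¹ (σg x I) = I := by
      rw [← Equiv.Perm.mul_apply, ← map_mul]; simp
    rw [hx'] at h
    exact h

/-- The union `𝔍` of all the iterates of the gap `I₀`. -/
def gapOrbit {Γ : Type*} [Group Γ] {μ : Set S1} (σg : Γ →* Equiv.Perm (Gap μ))
    (I₀ : Gap μ) : Set S1 :=
  ⋃ γ : Γ, ((σg γ I₀ : Gap μ) : Set S1)

/-- `f` restricts to a homeomorphism of the closure of `I` (the closure being compact,
a continuous bijection of it is automatically a homeomorphism). -/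
def IsClosureHomeo (f : S1 → S1) (I : Set S1) : Prop :=
  ContinuousOn f (closure I) ∧ Set.BijOn f (closure I) (closure I)

/-- `ρ'` is a modification of `ρ` on the gap `I₀` by `f₀` (with respect to the
distinguished element `ci` generating the stabilizer of `I₀`). -/
structure IsModification {Γ : Type*} [Group Γ] (ρ ρ' : Γ →* (S1 ≃ₜ S1)) (μ : Set S1) (k : ℕ)
    (T : TauData μ k) (σg : Γ →* Equiv.Perm (Gap μ)) (I₀ : Gap μ) (ci : Γ)
    (f₀ : S1 → S1) : Prop where
  rep' : IsMTSRep ρ' μ k T σg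
  eq_off : ∀ (γ : Γ) (x : S1), x ∉ gapOrbit σg I₀ → ρ' γ x = ρ γ x
  on_gap : ∀ x ∈ (I₀ : Set S1), ρ' ci x = f₀ x

/-- The (finite) `τ`-orbit of a point. -/
def tauOrbit {μ : Set S1} {k : ℕ} (T : TauData μ k) (x : S1) : Set S1 :=
  {y : S1 | ∃ j < k, (T.τ)^[j] x = y}

/-- The limiting behaviour required of a subsequence in the (k)-convergence property:
there are two `τ`-orbits (of points `xm`, `xp` of `μ`) such that on each compact subset of
the open arc `]τ^[i] xm, τ^[i+1] xm[` the sequence converges uniformly to `τ^[i] xp`. -/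
def KConvSeq (F : ℕ → (S1 ≃ₜ S1)) (μ : Set S1) (k : ℕ) (τ : S1 → S1) : Prop :=
  ∃ xm ∈ μ, ∃ xp ∈ μ, ∀ i < k, ∀ K : Set S1,
    K ⊆ oArc (τ^[i] xm) (τ^[i + 1] xm) → IsCompact K →
      TendstoUniformlyOn (fun n x => (F n) x) (fun _ => τ^[i] xp) atTop K

/-- The (discrete) (k)-convergence property. -/
def HasKConv {Γ : Type*} [Group Γ] (ρ : Γ →* (S1 ≃ₜ S1)) (μ : Set S1) (k : ℕ)
    (τ : S1 → S1) : Prop :=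
  ∀ γs : ℕ → Γ, ∃ φ : ℕ → ℕ, StrictMono φ ∧
    ((∀ m n : ℕ, ρ (γs (φ m)) = ρ (γs (φ n))) ∨
      KConvSeq (fun n => ρ (γs (φ n))) μ k τ)

/-- The almost (k)-convergence property. -/
def HasAlmostKConv {Γ : Type*} [Group Γ] (ρ : Γ →* (S1 ≃ₜ S1)) (μ : Set S1) (k : ℕ)
    (τ : S1 → S1) (σg : Γ →* Equiv.Perm (Gap μ)) : Prop :=
  ∀ γs : ℕ → Γ, ∃ φ : ℕ → ℕ, StrictMono φ ∧
    ((∀ m n : ℕ, ρ (γs (φ m)) = ρ (γs (φ n))) ∨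
      (∃ a γ : Γ, (∃ I : Gap μ, σg γ I = I) ∧
        ∃ p : ℕ → ℤ, ∀ n : ℕ, ρ (γs (φ n)) = ρ (γ ^ (p n) * a)) ∨
      KConvSeq (fun n => ρ (γs (φ n))) μ k τ)

/-- `x` is a topologically attracting fixed point of `f`. -/
def TopAttracting (f : S1 → S1) (x : S1) : Prop :=
  f x = x ∧ ∃ U ∈ 𝓝 x, TendstoUniformlyOn (fun n y => f^[n] y) (fun _ => x) atTop U

/-- `x` is a topologically hyperbolic (attracting or repelling) fixed point of the
homeomorphism `f`. -/
def HypFixed (f : S1 ≃ₜ S1) (x : S1) : Prop :=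
  TopAttracting f x ∨ TopAttracting f.symm x

/-- `x` is a topologically attracting fixed point of `f` within the set `s`. -/
def TopAttractingOn (f : S1 → S1) (s : Set S1) (x : S1) : Prop :=
  f x = x ∧ ∃ U ∈ 𝓝[s] x, TendstoUniformlyOn (fun n y => f^[n] y) (fun _ => x) atTop U

/-- `ρ` is `μ`-faithful. -/
def MuFaithful {Γ : Type*} [Group Γ] (ρ : Γ →* (S1 ≃ₜ S1)) (μ : Set S1) : Prop :=
  ∀ γ : Γ, (∀ x ∈ μ, ρ γ x = x) → γ = 1

/-- `ρ` is non-elementary: it has no finite orbit in the circle. -/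
def NonElementary {Γ : Type*} [Group Γ] (ρ : Γ →* (S1 ≃ₜ S1)) : Prop :=
  ∀ x : S1, ¬ (Set.range fun γ : Γ => ρ γ x).Finite

open scoped commutatorElement

/-- A presentation of a group `Γ` as the fundamental group of a compact 2-orbifold with
nonempty boundary:  generators `a i`, `b i` (handles, or crosscaps when non-orientable, in
which case the `b i` are trivial), torsion generators `d j` of orders `α j ≥ 2`, and
boundary generators `c i`, `q ≥ 1`, subject to the defining relations; being a presentation
is expressed by the universal lifting property. -/
structure OrbifoldPresentation (Γ : Type*) [Group Γ] : Type _ where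
  orientable : Bool
  g : ℕ
  p : ℕ
  q : ℕ
  a : Fin g → Γ
  b : Fin g → Γ
  d : Fin p → Γ
  c : Fin q → Γ
  α : Fin p → ℕ
  q_pos : 1 ≤ q
  α_two : ∀ j, 2 ≤ α j
  b_trivial : orientable = false → ∀ i, b i = 1
  rel_d : ∀ j, d j ^ (α j) = 1
  rel_long : (List.ofFn c).prod =
    (if orientable then (List.ofFn fun i => ⁅a i, b i⁆).prod
      else (List.ofFn fun i => (a i) ^ 2).prod) * (List.ofFn d).prod
  generates : Subgroup.closure
    (Set.range a ∪ Set.range b ∪ Set.range d ∪ Set.range c) = ⊤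
  liftUnique : ∀ (H : Type) (_ : Group H) (fa fb : Fin g → H) (fd : Fin p → H)
    (fc : Fin q → H),
    (orientable = false → ∀ i, fb i = 1) →
    (∀ j, fd j ^ (α j) = 1) →
    ((List.ofFn fc).prod =
      (if orientable then (List.ofFn fun i => ⁅fa i, fb i⁆).prod
        else (List.ofFn fun i => (fa i) ^ 2).prod) * (List.ofFn fd).prod) →
    ∃! φ : Γ →* H, (∀ i, φ (a i) = fa i) ∧ (∀ i, φ (b i) = fb i) ∧
      (∀ j, φ (d j) = fd j) ∧ (∀ i, φ (c i) = fc i)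


/-- `F : ℝ → ℝ` is a lift of the circle map `f` through the projection `ℝ → ℝ/ℤ`. -/
def IsLiftOf (F : ℝ → ℝ) (f : S1 → S1) : Prop :=
  ∀ x : ℝ, ((F x : ℝ) : S1) = f ((x : ℝ) : S1)

/-- Formal letters for words in the generators of an orbifold group presentation. -/
inductive OLetter (g p : ℕ) : Type
  | ga : Fin g → Bool → OLetter g p
  | gb : Fin g → Bool → OLetter g p
  | gd : Fin p → Bool → OLetter g p

/-- Evaluation of a letter in the group. -/
def evLetter {Γ : Type*} [Group Γ] (P : OrbifoldPresentation Γ) :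
    OLetter P.g P.p → Γ
  | .ga i bb => if bb then (P.a i)⁻¹ else P.a i
  | .gb i bb => if bb then (P.b i)⁻¹ else P.b i
  | .gd j bb => if bb then (P.d j)⁻¹ else P.d j

/-- Evaluation of a word (a list of letters), multiplying from left to right. -/
def evWord {Γ : Type*} [Group Γ] (P : OrbifoldPresentation Γ)
    (w : List (OLetter P.g P.p)) : Γ :=
  (w.map (evLetter P)).prod

/-- A word is admissible if, in the non-orientable case, it uses no `b`-letters. -/
def Admissible {Γ : Type*} [Group Γ] (P : OrbifoldPresentation Γ)
    (w : List (OLetter P.g P.p)) : Prop :=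
  P.orientable = false → ∀ l ∈ w, ∀ (i : Fin P.g) (bb : Bool), l ≠ OLetter.gb i bb

/-- The distinguished word `w₀` representing `c₁`:
`[a₁,b₁]⋯[a_g,b_g]d₁⋯d_p` in the orientable case, `a₁²⋯a_g²d₁⋯d_p` otherwise. -/
def w0 {Γ : Type*} [Group Γ] (P : OrbifoldPresentation Γ) : List (OLetter P.g P.p) :=
  (if P.orientable then
    (List.ofFn fun i : Fin P.g =>
      ([OLetter.ga i false, OLetter.gb i false, OLetter.ga i true, OLetter.gb i true] :
        List (OLetter P.g P.p))).flatten
   else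
    (List.ofFn fun i : Fin P.g =>
      ([OLetter.ga i false, OLetter.ga i false] : List (OLetter P.g P.p))).flatten)
  ++ (List.ofFn fun j : Fin P.p => OLetter.gd j false)

/-- The length `ℓ` of `w₀`. -/
def w0Len {Γ : Type*} [Group Γ] (P : OrbifoldPresentation Γ) : ℕ :=
  (if P.orientable then 4 * P.g else 2 * P.g) + P.p

/-- Iterated images `I_n` of the gap `I₀` under the successive elements of the list `l`:
`I_{n+1} = σ(l_n) I_n`. -/
def gapSeq {Γ : Type*} [Group Γ] {μ : Set S1} (σg : Γ →* Equiv.Perm (Gap μ))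
    (I₀ : Gap μ) (l : List Γ) : ℕ → Gap μ
  | 0 => I₀
  | n + 1 => σg (l.getD n 1) (gapSeq σg I₀ l n)

end PAFlow

/-!
On the translate `σ(γ) I₀` of the gap the conjugacy is forced to be `ρ'₂(γ) ∘ φ₀ ∘ ρ'₁(γ)⁻¹`.
This does not depend on the choice of `γ`: two choices differ by a power of `c_i`, which `φ₀`
conjugates from `ρ'₁` to `ρ'₂`. Off `𝔍` the conjugacy is the identity, and equivariance holds there
because `ρ'₁` and `ρ'₂` both agree with `ρ`. The same recipe applied to `φ₀⁻¹` gives the inverse.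

For continuity, cut the circle at a point `x₀` of `μ`. The map fixes `x₀` and fixes every point
off `𝔍`, and it maps each gap of `𝔍` to itself preserving orientation, because `ρ'₁(γ)` and
`ρ'₂(γ)` agree on `μ` and so have the same orientation type. Hence it is a strictly increasing
bijection of the cut circle `]0, 1[`, and so it is continuous.
-/

namespace PAFlow

/-- The coordinate in `[0, 1)` of `y` on the circle cut open at `x₀`. -/
def arcCoord (x₀ y : S1) : ℝ := pos1 (y - x₀)

section ArcCoord

variable {x₀ a b c p q r y : S1}

lemma pos1_coe (t : ℝ) : pos1 (t : S1) = Int.fract t := by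
  change ((AddCircle.equivIco 1 0 (QuotientAddGroup.mk t)) : ℝ) = _
  rw [AddCircle.coe_equivIco_mk_apply]
  simp

lemma coe_pos1 (x : S1) : ((pos1 x : ℝ) : S1) = x :=
  (AddCircle.equivIco 1 0).symm_apply_apply x

lemma arcCoord_mem_Ico (x₀ y : S1) : arcCoord x₀ y ∈ Ico (0 : ℝ) 1 := by
  simpa [arcCoord, pos1] using (AddCircle.equivIco 1 0 (y - x₀)).2

lemma arcCoord_lt_one (x₀ y : S1) : arcCoord x₀ y < 1 := (arcCoord_mem_Ico x₀ y).2

lemma coe_arcCoord_add (x₀ y : S1) : (arcCoord x₀ y : S1) + x₀ = y := by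
  rw [arcCoord, coe_pos1, sub_add_cancel]

lemma arcCoord_coe_add {t : ℝ} (ht : t ∈ Ico (0 : ℝ) 1) (x₀ : S1) :
    arcCoord x₀ ((t : S1) + x₀) = t := by
  rw [arcCoord, add_sub_cancel_right, pos1_coe, Int.fract_eq_self.2 ht]

lemma arcCoord_injective (x₀ : S1) : Function.Injective (arcCoord x₀) := fun y z h => by
  rw [← coe_arcCoord_add x₀ y, h, coe_arcCoord_add]

lemma arcCoord_self (x₀ : S1) : arcCoord x₀ x₀ = 0 := by
  simpa using arcCoord_coe_add (t := 0) (by simp) x₀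

lemma arcCoord_pos (h : y ≠ x₀) : 0 < arcCoord x₀ y :=
  (arcCoord_mem_Ico x₀ y).1.lt_of_ne fun e =>
    h (arcCoord_injective x₀ (e.symm.trans (arcCoord_self x₀).symm))

lemma arcCoord_eq_fract (x₀ p q : S1) :
    arcCoord p q = Int.fract (arcCoord x₀ q - arcCoord x₀ p) := by
  conv_lhs => rw [← coe_arcCoord_add x₀ q, ← coe_arcCoord_add x₀ p]
  rw [arcCoord, add_sub_add_right_eq_sub, ← AddCircle.coe_sub, pos1_coe]

lemma arcCoord_of_le (h : arcCoord x₀ p ≤ arcCoord x₀ q) :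
    arcCoord p q = arcCoord x₀ q - arcCoord x₀ p := by
  rw [arcCoord_eq_fract x₀, Int.fract_eq_self.2 ⟨by linarith, by
    linarith [arcCoord_lt_one x₀ q, (arcCoord_mem_Ico x₀ p).1]⟩]

lemma arcCoord_of_lt (h : arcCoord x₀ q < arcCoord x₀ p) :
    arcCoord p q = arcCoord x₀ q - arcCoord x₀ p + 1 := by
  rw [arcCoord_eq_fract x₀, ← Int.fract_add_one, Int.fract_eq_self.2 ⟨by
    linarith [arcCoord_lt_one x₀ p, (arcCoord_mem_Ico x₀ q).1], by linarith⟩]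

lemma continuousAt_arcCoord (h : y ≠ x₀) : ContinuousAt (arcCoord x₀) y := by
  have hy : y - x₀ ≠ ((0 : ℝ) : S1) := by simpa [sub_eq_zero] using h
  exact continuousAt_subtype_val.comp
    ((AddCircle.continuousAt_equivIco 1 0 hy).comp (f := fun y => y - x₀)
      (continuous_sub_right x₀).continuousAt)

lemma continuousOn_arcCoord (x₀ : S1) : ContinuousOn (arcCoord x₀) {x₀}ᶜ :=
  fun _ hy => (continuousAt_arcCoord hy).continuousWithinAt

lemma mem_oArc_iff (hac : a ≠ c) :
    b ∈ oArc a c ↔ 0 < arcCoord a b ∧ arcCoord a b < arcCoord a c := by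
  rw [oArc, if_neg hac]; rfl

lemma mem_oArc_self : b ∈ oArc a a ↔ b ≠ a := by
  rw [oArc, if_pos rfl]; rfl

lemma ne_left_of_mem_oArc (h : b ∈ oArc a c) : b ≠ a := by
  rcases eq_or_ne a c with rfl | hac
  · exact mem_oArc_self.1 h
  · exact fun e => by subst e; exact ((mem_oArc_iff hac).1 h).1.ne' (arcCoord_self b)

lemma ne_right_of_mem_oArc (h : b ∈ oArc a c) : b ≠ c := by
  rcases eq_or_ne a c with rfl | hac
  · exact mem_oArc_self.1 h
  · exact fun e => by subst e; exact lt_irrefl _ ((mem_oArc_iff hac).1 h).2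

lemma mem_oArc_swap_iff (hac : a ≠ c) : b ∈ oArc c a ↔ arcCoord a c < arcCoord a b := by
  have hc : 0 < arcCoord a c := arcCoord_pos hac.symm
  have hca : arcCoord c a = 1 - arcCoord a c := by
    rw [arcCoord_of_lt (x₀ := a) (by rwa [arcCoord_self]), arcCoord_self]; ring
  rw [mem_oArc_iff hac.symm, hca]
  rcases lt_or_ge (arcCoord a c) (arcCoord a b) with h | h
  · rw [arcCoord_of_le (x₀ := a) h.le]
    exact iff_of_true ⟨by linarith, by linarith [arcCoord_lt_one a b]⟩ h
  · refine iff_of_false ?_ h.not_gt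
    rcases h.eq_or_lt with h | h
    · rw [arcCoord_injective a h, arcCoord_self]; exact fun h' => lt_irrefl _ h'.1
    · rw [arcCoord_of_lt h]; intro h'; linarith [h'.2, (arcCoord_mem_Ico a b).1]

lemma notMem_oArc_swap (hac : a ≠ c) (h : b ∈ oArc a c) : b ∉ oArc c a := by
  rw [mem_oArc_swap_iff hac, not_lt]; exact ((mem_oArc_iff hac).1 h).2.le

lemma mem_oArc_or_mem_oArc_swap (hba : b ≠ a) (hbc : b ≠ c) (hac : a ≠ c) :
    b ∈ oArc a c ∨ b ∈ oArc c a := by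
  rw [mem_oArc_iff hac, mem_oArc_swap_iff hac]
  rcases lt_trichotomy (arcCoord a b) (arcCoord a c) with h | h | h
  · exact Or.inl ⟨arcCoord_pos hba, h⟩
  · exact absurd (arcCoord_injective a h) hbc
  · exact Or.inr h

lemma mem_oArc_of_arcCoord_lt (hpq : arcCoord x₀ p < arcCoord x₀ q)
    (hqr : arcCoord x₀ q < arcCoord x₀ r) : q ∈ oArc p r := by
  have hpr : p ≠ r := fun e => by subst e; linarith
  rw [mem_oArc_iff hpr, arcCoord_of_le hpq.le, arcCoord_of_le (hpq.trans hqr).le]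
  constructor <;> linarith

end ArcCoord

section Orientation

def PreservesArcsOn (f : S1 → S1) (s : Set S1) : Prop :=
  ∀ x ∈ s, ∀ y ∈ s, ∀ z ∈ s, y ∈ oArc x z → f y ∈ oArc (f x) (f z)

def SameOrientation (f g : S1 ≃ₜ S1) : Prop :=
  (OrientPres f ∧ OrientPres g) ∨ (OrientRev f ∧ OrientRev g)

variable {f g : S1 ≃ₜ S1} {a b c : S1}

lemma OrientPres.symm (h : OrientPres f) : OrientPres f.symm := by
  intro a b c hb
  rcases eq_or_ne a c with rfl | hac
  · exact mem_oArc_self.2 (f.symm.injective.ne (mem_oArc_self.1 hb))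
  refine (mem_oArc_or_mem_oArc_swap (f.symm.injective.ne (ne_left_of_mem_oArc hb))
    (f.symm.injective.ne (ne_right_of_mem_oArc hb)) (f.symm.injective.ne hac)).resolve_right
    fun h' => notMem_oArc_swap hac hb ?_
  simpa using h _ _ _ h'

lemma OrientRev.symm (h : OrientRev f) : OrientRev f.symm := by
  intro a b c hb
  rcases eq_or_ne a c with rfl | hac
  · exact mem_oArc_self.2 (f.symm.injective.ne (mem_oArc_self.1 hb))
  refine (mem_oArc_or_mem_oArc_swap (f.symm.injective.ne (ne_right_of_mem_oArc hb))
    (f.symm.injective.ne (ne_left_of_mem_oArc hb)) (f.symm.injective.ne hac.symm)).resolve_right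
    fun h' => notMem_oArc_swap hac hb ?_
  simpa using h _ _ _ h'

lemma sameOrientation_of_eq (hf : OrientPres f ∨ OrientRev f) (hg : OrientPres g ∨ OrientRev g)
    (hac : a ≠ c) (hb : b ∈ oArc a c) (ha : f a = g a) (hb' : f b = g b) (hc : f c = g c) :
    SameOrientation f g := by
  have hac' : f a ≠ f c := f.injective.ne hac
  rcases hf with hf | hf <;> rcases hg with hg | hg
  · exact Or.inl ⟨hf, hg⟩
  · refine absurd (hf a b c hb) (notMem_oArc_swap hac'.symm ?_)
    simpa [ha, hb', hc] using hg a b c hb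
  · refine absurd (hf a b c hb) (notMem_oArc_swap hac' ?_)
    simpa [ha, hb', hc] using hg a b c hb
  · exact Or.inr ⟨hf, hg⟩

lemma exists_mem_oArc_of_perfect {μ : Set S1} (hμ : Perfect μ) (hne : μ.Nonempty) :
    ∃ a ∈ μ, ∃ b ∈ μ, ∃ c ∈ μ, a ≠ c ∧ b ∈ oArc a c := by
  obtain ⟨x, hx⟩ := hne
  have hacc := preperfect_iff_nhds.1 hμ.acc x hx
  obtain ⟨y, ⟨-, hy⟩, hyx⟩ := hacc univ univ_mem
  obtain ⟨z, ⟨hzy, hz⟩, hzx⟩ :=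
    hacc {y}ᶜ (isOpen_compl_singleton.mem_nhds (mem_compl_singleton_iff.2 hyx.symm))
  rcases mem_oArc_or_mem_oArc_swap hyx (Ne.symm hzy) (Ne.symm hzx) with h | h
  · exact ⟨x, hx, y, hy, z, hz, Ne.symm hzx, h⟩
  · exact ⟨z, hz, y, hy, x, hx, hzx, h⟩

end Orientation

section Monotone

variable {x₀ y z : S1} {J A B : Set S1}

lemma mem_of_arcCoord_mem_Icc (hJ : IsPreconnected J) (hx₀ : x₀ ∉ J) (hy : y ∈ J) (hz : z ∈ J)
    {w : S1} (hw : arcCoord x₀ w ∈ Icc (arcCoord x₀ y) (arcCoord x₀ z)) : w ∈ J := by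
  have hsub : J ⊆ {x₀}ᶜ := subset_compl_singleton_iff.2 hx₀
  obtain ⟨v, hv, hvw⟩ := (hJ.image _ ((continuousOn_arcCoord x₀).mono hsub)).ordConnected.out
    (mem_image_of_mem _ hy) (mem_image_of_mem _ hz) hw
  exact arcCoord_injective x₀ hvw ▸ hv

lemma arcCoord_lt_of_disjoint (hA : IsPreconnected A) (hB : IsPreconnected B) (hxA : x₀ ∉ A)
    (hxB : x₀ ∉ B) (hAB : Disjoint A B) {y' z' : S1} (hy : y ∈ A) (hy' : y' ∈ A) (hz : z ∈ B)
    (hz' : z' ∈ B) (hlt : arcCoord x₀ y < arcCoord x₀ z) : arcCoord x₀ y' < arcCoord x₀ z' := by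
  by_contra! hle
  rcases le_or_gt (arcCoord x₀ z') (arcCoord x₀ y) with h | h
  · exact hAB.notMem_of_mem_left hy (mem_of_arcCoord_mem_Icc hB hxB hz' hz ⟨h, hlt.le⟩)
  · exact hAB.notMem_of_mem_right hz' (mem_of_arcCoord_mem_Icc hA hxA hy hy' ⟨h.le, hle⟩)

lemma arcCoord_lt_of_preservesArcsOn {f : S1 → S1} (hJ : IsPreconnected J) (hx₀ : x₀ ∉ J)
    (hfc : ContinuousOn f J) (hfi : InjOn f J) (hfJ : MapsTo f J J) (hf : PreservesArcsOn f J)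
    (hy : y ∈ J) (hz : z ∈ J) (hlt : arcCoord x₀ y < arcCoord x₀ z) :
    arcCoord x₀ (f y) < arcCoord x₀ (f z) := by
  set e : ℝ → S1 := fun t => (t : S1) + x₀ with he
  set K := Icc (arcCoord x₀ y) (arcCoord x₀ z)
  have hK : ∀ t ∈ K, e t ∈ J ∧ arcCoord x₀ (e t) = t := by
    intro t ht
    have hue : arcCoord x₀ (e t) = t := arcCoord_coe_add
      ⟨(arcCoord_mem_Ico x₀ y).1.trans ht.1, ht.2.trans_lt (arcCoord_lt_one x₀ z)⟩ x₀
    refine ⟨mem_of_arcCoord_mem_Icc hJ hx₀ hy hz ?_, hue⟩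
    rwa [hue]
  have hsub : J ⊆ {x₀}ᶜ := subset_compl_singleton_iff.2 hx₀
  set F := arcCoord x₀ ∘ f ∘ e with hF
  have hFu : ∀ w, F (arcCoord x₀ w) = arcCoord x₀ (f w) := fun w => by
    simp [hF, he, coe_arcCoord_add]
  have hFc : ContinuousOn F K :=
    (continuousOn_arcCoord x₀).comp (hfc.comp (by fun_prop : Continuous e).continuousOn
      fun t ht => (hK t ht).1) fun t ht => hsub (hfJ (hK t ht).1)
  have hFi : InjOn F K := fun s hs t ht hst => by
    rw [← (hK s hs).2, ← (hK t ht).2, hfi (hK s hs).1 (hK t ht).1 (arcCoord_injective x₀ hst)]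
  rcases hFc.strictMonoOn_of_injOn_Icc' hlt.le hFi with hmono | hanti
  · simpa only [hFu] using hmono (left_mem_Icc.2 hlt.le) (right_mem_Icc.2 hlt.le) hlt
  -- an orientation-reversing map would send a point between `y` and `z` outside the image arc
  obtain ⟨m, hym, hmz⟩ := exists_between hlt
  have hm : m ∈ K := ⟨hym.le, hmz.le⟩
  have hq : e m ∈ oArc y z := by
    refine mem_oArc_of_arcCoord_lt (x₀ := x₀) ?_ ?_ <;> rw [(hK m hm).2] <;> assumption
  have h₁ := hanti (left_mem_Icc.2 hlt.le) hm hym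
  have h₂ := hanti hm (right_mem_Icc.2 hlt.le) hmz
  rw [hFu] at h₁ h₂
  exact (notMem_oArc_swap (hfi.ne hy hz fun h => hlt.ne (congrArg (arcCoord x₀) h))
    (hf y hy (e m) (hK m hm).1 z hz hq) (mem_oArc_of_arcCoord_lt (q := f (e m)) h₂ h₁)).elim

lemma continuousOn_compl_of_arcCoord_lt {f : S1 → S1} (hf : Function.Bijective f)
    (hfix : f x₀ = x₀) (hmono : ∀ y z, y ≠ x₀ → z ≠ x₀ →
      arcCoord x₀ y < arcCoord x₀ z → arcCoord x₀ (f y) < arcCoord x₀ (f z)) :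
    ContinuousOn f {x₀}ᶜ := by
  set e : ℝ → S1 := fun t => (t : S1) + x₀ with he
  set F : ℝ → ℝ := fun t => arcCoord x₀ (f (e t)) with hF
  have hue : ∀ t ∈ Ioo (0 : ℝ) 1, arcCoord x₀ (e t) = t := fun t ht =>
    arcCoord_coe_add (Ioo_subset_Ico_self ht) x₀
  have hne : ∀ t ∈ Ioo (0 : ℝ) 1, e t ≠ x₀ := fun t ht h =>
    ht.1.ne' (by rw [← hue t ht, h, arcCoord_self])
  have hFmono : StrictMonoOn F (Ioo 0 1) := fun s hs t ht hst =>
    hmono _ _ (hne s hs) (hne t ht) (by rwa [hue s hs, hue t ht])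
  have hFimage : F '' Ioo 0 1 = Ioo 0 1 := by
    ext r
    constructor
    · rintro ⟨t, ht, rfl⟩
      exact ⟨arcCoord_pos fun h => hne t ht (hf.1 (h.trans hfix.symm)), arcCoord_lt_one _ _⟩
    · intro hr
      obtain ⟨y, hy⟩ := hf.2 (e r)
      have hyx : y ≠ x₀ := fun h => hne r hr (by rw [← hy, h, hfix])
      refine ⟨arcCoord x₀ y, ⟨arcCoord_pos hyx, arcCoord_lt_one _ _⟩, ?_⟩
      simp only [hF, he, coe_arcCoord_add, hy]
      exact hue r hr
  have hFc : ∀ t ∈ Ioo (0 : ℝ) 1, ContinuousAt F t := fun t ht =>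
    hFmono.continuousAt_of_image_mem_nhds (Ioo_mem_nhds ht.1 ht.2) (by
      rw [hFimage]
      obtain ⟨h₀, h₁⟩ := hFimage ▸ mem_image_of_mem F ht
      exact Ioo_mem_nhds h₀ h₁)
  have hf_eq : f = e ∘ F ∘ arcCoord x₀ := funext fun y => by simp [hF, he, coe_arcCoord_add]
  intro y hy
  rw [hf_eq]
  exact ((by fun_prop : Continuous e).continuousAt.comp ((hFc _ ⟨arcCoord_pos hy,
    arcCoord_lt_one _ _⟩).comp (continuousAt_arcCoord hy))).continuousWithinAt

end Monotone

section Gaps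

variable {μ : Set S1} {x : S1}

lemma Gap.subset_compl (I : Gap μ) : (I : Set S1) ⊆ μᶜ := by
  obtain ⟨x, -, h⟩ := I.2
  exact h ▸ connectedComponentIn_subset _ _

lemma Gap.isPreconnected (I : Gap μ) : IsPreconnected (I : Set S1) := by
  obtain ⟨x, -, h⟩ := I.2
  exact h ▸ isPreconnected_connectedComponentIn

lemma Gap.eq_of_mem {I J : Gap μ} (hI : x ∈ (I : Set S1)) (hJ : x ∈ (J : Set S1)) : I = J := by
  obtain ⟨a, -, ha⟩ := I.2
  obtain ⟨b, -, hb⟩ := J.2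
  refine Subtype.ext ?_
  rw [ha] at hI ⊢
  rw [hb] at hJ ⊢
  rw [connectedComponentIn_eq hI, connectedComponentIn_eq hJ]

lemma Gap.disjoint_of_ne {I J : Gap μ} (h : I ≠ J) : Disjoint (I : Set S1) (J : Set S1) :=
  Set.disjoint_left.2 fun _ hI hJ => h (Gap.eq_of_mem hI hJ)

lemma notMem_gapOrbit_of_mem {Γ : Type*} [Group Γ] (σg : Γ →* Equiv.Perm (Gap μ))
    (I₀ : Gap μ) (hx : x ∈ μ) : x ∉ gapOrbit σg I₀ := fun h => by
  obtain ⟨γ, hγ⟩ := mem_iUnion.1 h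
  exact (σg γ I₀).subset_compl hγ hx

end Gaps

@[simp] lemma homeo_mul_apply {X : Type*} [TopologicalSpace X] (f g : X ≃ₜ X) (x : X) :
    (f * g) x = f (g x) := rfl

lemma homeo_coe_mul {X : Type*} [TopologicalSpace X] (f g : X ≃ₜ X) : ⇑(f * g) = f ∘ g := rfl

@[simp] lemma homeo_inv_apply {X : Type*} [TopologicalSpace X] (f : X ≃ₜ X) (x : X) :
    f⁻¹ x = f.symm x := rfl

section Extension

variable {Γ : Type*} [Group Γ] {μ : Set S1} {σg : Γ →* Equiv.Perm (Gap μ)} {I₀ : Gap μ}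
  {ρ₁ ρ₂ : Γ →* (S1 ≃ₜ S1)} {φ₀ ψ₀ : S1 → S1} {c γ δ : Γ} {x : S1}

structure IsGapConjugacy (σg : Γ →* Equiv.Perm (Gap μ)) (I₀ : Gap μ)
    (ρ₁ ρ₂ : Γ →* (S1 ≃ₜ S1)) (φ₀ : S1 → S1) (c : Γ) : Prop where
  image₁ : ∀ γ, (σg γ I₀ : Set S1) = ρ₁ γ '' I₀
  image₂ : ∀ γ, (σg γ I₀ : Set S1) = ρ₂ γ '' I₀
  stab : gapStab σg I₀ = Subgroup.zpowers c
  mapsTo : MapsTo φ₀ I₀ I₀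
  conj : ∀ x ∈ (I₀ : Set S1), φ₀ (ρ₁ c x) = ρ₂ c (φ₀ x)

open Classical in
def gapExtension (σg : Γ →* Equiv.Perm (Gap μ)) (I₀ : Gap μ) (ρ₁ ρ₂ : Γ →* (S1 ≃ₜ S1))
    (φ₀ : S1 → S1) (x : S1) : S1 :=
  if h : x ∈ gapOrbit σg I₀ then
    ρ₂ (mem_iUnion.1 h).choose (φ₀ (ρ₁ (mem_iUnion.1 h).choose⁻¹ x))
  else x

lemma gapExtension_of_notMem (hx : x ∉ gapOrbit σg I₀) :
    gapExtension σg I₀ ρ₁ ρ₂ φ₀ x = x := by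
  rw [gapExtension, dif_neg hx]

namespace IsGapConjugacy

variable (G : IsGapConjugacy σg I₀ ρ₁ ρ₂ φ₀ c)
include G

lemma apply_mem₁ (hx : x ∈ (I₀ : Set S1)) : ρ₁ γ x ∈ (σg γ I₀ : Set S1) :=
  G.image₁ γ ▸ mem_image_of_mem _ hx

lemma apply_mem₂ (hx : x ∈ (I₀ : Set S1)) : ρ₂ γ x ∈ (σg γ I₀ : Set S1) :=
  G.image₂ γ ▸ mem_image_of_mem _ hx

lemma inv_apply_mem (hx : x ∈ (σg γ I₀ : Set S1)) : ρ₁ γ⁻¹ x ∈ (I₀ : Set S1) := by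
  rw [G.image₁] at hx
  obtain ⟨y, hy, rfl⟩ := hx
  simpa using hy

lemma apply_mem_mul_iff : ρ₁ γ x ∈ (σg (γ * δ) I₀ : Set S1) ↔ x ∈ (σg δ I₀ : Set S1) := by
  rw [G.image₁, G.image₁, map_mul, homeo_coe_mul, image_comp]
  exact (ρ₁ γ).injective.mem_set_image

lemma zpow_translate (n : ℤ) : σg (c ^ n) I₀ = I₀ :=
  (G.stab ▸ Subgroup.zpow_mem_zpowers c n : c ^ n ∈ gapStab σg I₀)

lemma zpow_apply_mem (n : ℤ) (hx : x ∈ (I₀ : Set S1)) : ρ₁ (c ^ n) x ∈ (I₀ : Set S1) :=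
  G.zpow_translate n ▸ G.apply_mem₁ hx

lemma conj_inv : ∀ x ∈ (I₀ : Set S1), φ₀ (ρ₁ c⁻¹ x) = ρ₂ c⁻¹ (φ₀ x) := by
  intro x hx
  have := G.conj _ (by simpa using G.zpow_apply_mem (-1) hx)
  simp only [map_inv, homeo_inv_apply, Homeomorph.apply_symm_apply] at this ⊢
  rw [this, Homeomorph.symm_apply_apply]

lemma conj_zpow (n : ℤ) : ∀ x ∈ (I₀ : Set S1), φ₀ (ρ₁ (c ^ n) x) = ρ₂ (c ^ n) (φ₀ x) := by
  induction n using Int.induction_on with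
  | zero => simp
  | succ n ih =>
    intro x hx
    simp only [zpow_add_one, map_mul, homeo_mul_apply]
    rw [ih _ (by simpa using G.zpow_apply_mem 1 hx), G.conj x hx]
  | pred n ih =>
    intro x hx
    simp only [zpow_sub_one, map_mul, homeo_mul_apply]
    rw [ih _ (by simpa using G.zpow_apply_mem (-1) hx), G.conj_inv x hx]

lemma eq_of_translate_eq (h : σg γ I₀ = σg δ I₀) (hx : x ∈ (σg γ I₀ : Set S1)) :
    ρ₂ γ (φ₀ (ρ₁ γ⁻¹ x)) = ρ₂ δ (φ₀ (ρ₁ δ⁻¹ x)) := by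
  have hmem : δ⁻¹ * γ ∈ gapStab σg I₀ := by
    change σg (δ⁻¹ * γ) I₀ = I₀
    rw [map_mul, Equiv.Perm.mul_apply, h, ← Equiv.Perm.mul_apply, ← map_mul, inv_mul_cancel,
      map_one, Equiv.Perm.one_apply]
  obtain ⟨n, hn⟩ := Subgroup.mem_zpowers_iff.1 (G.stab ▸ hmem)
  obtain rfl : γ = δ * c ^ n := by rw [hn, mul_inv_cancel_left]
  have hy : ρ₁ δ⁻¹ x ∈ (I₀ : Set S1) := G.inv_apply_mem (h ▸ hx)
  have := G.conj_zpow (-n) _ hy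
  simp only [zpow_neg, map_inv, map_mul, mul_inv_rev, homeo_mul_apply, homeo_inv_apply] at this ⊢
  rw [this, Homeomorph.apply_symm_apply]

lemma gapExtension_eq (hx : x ∈ (σg γ I₀ : Set S1)) :
    gapExtension σg I₀ ρ₁ ρ₂ φ₀ x = ρ₂ γ (φ₀ (ρ₁ γ⁻¹ x)) := by
  have h : x ∈ gapOrbit σg I₀ := mem_iUnion.2 ⟨γ, hx⟩
  have hchoose := (mem_iUnion.1 h).choose_spec
  rw [gapExtension, dif_pos h]
  exact G.eq_of_translate_eq (Gap.eq_of_mem hchoose hx) hchoose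

lemma gapExtension_eq_of_mem (hx : x ∈ (I₀ : Set S1)) : gapExtension σg I₀ ρ₁ ρ₂ φ₀ x = φ₀ x := by
  simpa using G.gapExtension_eq (γ := 1) (by simpa using hx)

lemma gapExtension_mem (hx : x ∈ (σg γ I₀ : Set S1)) :
    gapExtension σg I₀ ρ₁ ρ₂ φ₀ x ∈ (σg γ I₀ : Set S1) :=
  G.gapExtension_eq hx ▸ G.apply_mem₂ (G.mapsTo (G.inv_apply_mem hx))

lemma symm (hφ₀ : BijOn φ₀ I₀ I₀) :
    IsGapConjugacy σg I₀ ρ₂ ρ₁ (Function.invFunOn φ₀ I₀) c where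
  image₁ := G.image₂
  image₂ := G.image₁
  stab := G.stab
  mapsTo := hφ₀.surjOn.mapsTo_invFunOn
  conj y hy := by
    obtain ⟨x, hx, rfl⟩ := hφ₀.surjOn hy
    have hinv := hφ₀.invOn_invFunOn
    rw [← G.conj x hx, hinv.1 hx, hinv.1 (by simpa using G.zpow_apply_mem 1 hx)]

lemma leftInverse_gapExtension (G' : IsGapConjugacy σg I₀ ρ₂ ρ₁ ψ₀ c)
    (hψφ : LeftInvOn ψ₀ φ₀ I₀) :
    Function.LeftInverse (gapExtension σg I₀ ρ₂ ρ₁ ψ₀) (gapExtension σg I₀ ρ₁ ρ₂ φ₀) := by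
  intro x
  by_cases hx : x ∈ gapOrbit σg I₀
  · obtain ⟨γ, hγ⟩ := mem_iUnion.1 hx
    rw [G'.gapExtension_eq (G.gapExtension_mem hγ), G.gapExtension_eq hγ]
    simp only [map_inv, homeo_inv_apply, Homeomorph.symm_apply_apply]
    rw [hψφ (by simpa using G.inv_apply_mem hγ), Homeomorph.apply_symm_apply]
  · rw [gapExtension_of_notMem hx, gapExtension_of_notMem hx]

lemma bijective_gapExtension (hφ₀ : BijOn φ₀ I₀ I₀) :
    Function.Bijective (gapExtension σg I₀ ρ₁ ρ₂ φ₀) := by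
  have G' := G.symm hφ₀
  have hinv := hφ₀.invOn_invFunOn
  exact ⟨(G.leftInverse_gapExtension G' hinv.1).injective,
    (G'.leftInverse_gapExtension G hinv.2).surjective⟩

lemma gapExtension_apply (hoff : ∀ γ x, x ∉ gapOrbit σg I₀ → ρ₁ γ x = ρ₂ γ x) (γ : Γ) (x : S1) :
    gapExtension σg I₀ ρ₁ ρ₂ φ₀ (ρ₁ γ x) = ρ₂ γ (gapExtension σg I₀ ρ₁ ρ₂ φ₀ x) := by
  by_cases hx : x ∈ gapOrbit σg I₀
  · obtain ⟨δ, hδ⟩ := mem_iUnion.1 hx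
    rw [G.gapExtension_eq ((G.apply_mem_mul_iff).2 hδ), G.gapExtension_eq hδ]
    simp [map_mul]
  · have hx' : ρ₁ γ x ∉ gapOrbit σg I₀ := fun h => by
      obtain ⟨δ, hδ⟩ := mem_iUnion.1 h
      rw [← mul_inv_cancel_left γ δ, G.apply_mem_mul_iff] at hδ
      exact hx (mem_iUnion.2 ⟨_, hδ⟩)
    rw [gapExtension_of_notMem hx', gapExtension_of_notMem hx, hoff γ x hx]

lemma continuousOn_gapExtension (hφc : ContinuousOn φ₀ I₀) (γ : Γ) :
    ContinuousOn (gapExtension σg I₀ ρ₁ ρ₂ φ₀) (σg γ I₀ : Set S1) :=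
  ((ρ₂ γ).continuous.comp_continuousOn (hφc.comp (ρ₁ γ⁻¹).continuous.continuousOn
    fun _ => G.inv_apply_mem)).congr fun _ hx => G.gapExtension_eq hx

lemma preservesArcsOn_gapExtension (hφo : PreservesArcsOn φ₀ I₀)
    (hγ : SameOrientation (ρ₁ γ) (ρ₂ γ)) :
    PreservesArcsOn (gapExtension σg I₀ ρ₁ ρ₂ φ₀) (σg γ I₀ : Set S1) := by
  intro p hp q hq r hr h
  rw [G.gapExtension_eq hp, G.gapExtension_eq hq, G.gapExtension_eq hr]
  have hp' := G.inv_apply_mem hp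
  have hq' := G.inv_apply_mem hq
  have hr' := G.inv_apply_mem hr
  rcases hγ with ⟨h₁, h₂⟩ | ⟨h₁, h₂⟩
  · exact h₂ _ _ _ (hφo _ hp' _ hq' _ hr' (by simpa using h₁.symm p q r h))
  · exact h₂ _ _ _ (hφo _ hr' _ hq' _ hp' (by simpa using h₁.symm p q r h))

lemma arcCoord_gapExtension_lt (hinj : Function.Injective (gapExtension σg I₀ ρ₁ ρ₂ φ₀))
    (hφc : ContinuousOn φ₀ I₀) (hφo : PreservesArcsOn φ₀ I₀)
    (hsame : ∀ γ, SameOrientation (ρ₁ γ) (ρ₂ γ)) {x₀ y z : S1} (hx₀ : x₀ ∉ gapOrbit σg I₀)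
    (hy : y ≠ x₀) (hz : z ≠ x₀) (hlt : arcCoord x₀ y < arcCoord x₀ z) :
    arcCoord x₀ (gapExtension σg I₀ ρ₁ ρ₂ φ₀ y) < arcCoord x₀ (gapExtension σg I₀ ρ₁ ρ₂ φ₀ z) := by
  have hx₀J : ∀ γ, x₀ ∉ (σg γ I₀ : Set S1) := fun γ h => hx₀ (mem_iUnion.2 ⟨γ, h⟩)
  by_cases hyo : y ∈ gapOrbit σg I₀ <;> by_cases hzo : z ∈ gapOrbit σg I₀
  · obtain ⟨γ, hγ⟩ := mem_iUnion.1 hyo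
    obtain ⟨δ, hδ⟩ := mem_iUnion.1 hzo
    by_cases hγδ : σg γ I₀ = σg δ I₀
    · exact arcCoord_lt_of_preservesArcsOn (σg γ I₀).isPreconnected (hx₀J γ)
        (G.continuousOn_gapExtension hφc γ) hinj.injOn (fun _ => G.gapExtension_mem)
        (G.preservesArcsOn_gapExtension hφo (hsame γ)) hγ (hγδ ▸ hδ) hlt
    · exact arcCoord_lt_of_disjoint (σg γ I₀).isPreconnected (σg δ I₀).isPreconnected
        (hx₀J γ) (hx₀J δ) (Gap.disjoint_of_ne hγδ) hγ (G.gapExtension_mem hγ) hδ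
        (G.gapExtension_mem hδ) hlt
  · obtain ⟨γ, hγ⟩ := mem_iUnion.1 hyo
    rw [gapExtension_of_notMem hzo]
    exact arcCoord_lt_of_disjoint (σg γ I₀).isPreconnected isPreconnected_singleton (hx₀J γ)
      hz.symm (disjoint_singleton_right.2 fun h => hzo (mem_iUnion.2 ⟨γ, h⟩)) hγ
      (G.gapExtension_mem hγ) rfl rfl hlt
  · obtain ⟨δ, hδ⟩ := mem_iUnion.1 hzo
    rw [gapExtension_of_notMem hyo]
    exact arcCoord_lt_of_disjoint isPreconnected_singleton (σg δ I₀).isPreconnected hy.symm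
      (hx₀J δ) (disjoint_singleton_left.2 fun h => hyo (mem_iUnion.2 ⟨δ, h⟩)) rfl rfl hδ
      (G.gapExtension_mem hδ) hlt
  · rwa [gapExtension_of_notMem hyo, gapExtension_of_notMem hzo]

lemma continuous_gapExtension (hφ₀ : BijOn φ₀ I₀ I₀) (hφc : ContinuousOn φ₀ I₀)
    (hφo : PreservesArcsOn φ₀ I₀) (hsame : ∀ γ, SameOrientation (ρ₁ γ) (ρ₂ γ)) {a b : S1}
    (ha : a ∉ gapOrbit σg I₀) (hb : b ∉ gapOrbit σg I₀) (hab : a ≠ b) :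
    Continuous (gapExtension σg I₀ ρ₁ ρ₂ φ₀) := by
  have hbij := G.bijective_gapExtension hφ₀
  have hcont : ∀ x₀ ∉ gapOrbit σg I₀, ContinuousOn (gapExtension σg I₀ ρ₁ ρ₂ φ₀) {x₀}ᶜ :=
    fun x₀ hx₀ => continuousOn_compl_of_arcCoord_lt hbij (gapExtension_of_notMem hx₀)
      fun _ _ hy hz => G.arcCoord_gapExtension_lt hbij.1 hφc hφo hsame hx₀ hy hz
  refine continuous_iff_continuousAt.2 fun x => ?_
  rcases ne_or_eq x a with hxa | rfl
  · exact (hcont a ha).continuousAt (isOpen_compl_singleton.mem_nhds hxa)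
  · exact (hcont b hb).continuousAt (isOpen_compl_singleton.mem_nhds hab)

end IsGapConjugacy

end Extension

end PAFlow

open PAFlow in
theorem statement2_general {Γ : Type} [Group Γ] (P : OrbifoldPresentation Γ)
    (ρ : Γ →* (S1 ≃ₜ S1)) (μ : Set S1) (k : ℕ)
    (T : TauData μ k) (σg : Γ →* Equiv.Perm (Gap μ))
    (I₀ : Gap μ)
    (i : Fin P.q) (hstab : gapStab σg I₀ = Subgroup.zpowers (P.c i))
    (f₀ g₀ : S1 → S1)
    (φ₀ : S1 → S1)
    (hφ₀cont : ContinuousOn φ₀ (I₀ : Set S1))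
    (hφ₀bij : Set.BijOn φ₀ (I₀ : Set S1) (I₀ : Set S1))
    (hφ₀orient : ∀ x ∈ (I₀ : Set S1), ∀ y ∈ (I₀ : Set S1), ∀ z ∈ (I₀ : Set S1),
      y ∈ oArc x z → φ₀ y ∈ oArc (φ₀ x) (φ₀ z))
    (hconj : ∀ x ∈ (I₀ : Set S1), φ₀ (f₀ x) = g₀ (φ₀ x))
    (ρ'₁ ρ'₂ : Γ →* (S1 ≃ₜ S1))
    (h₁ : IsModification ρ ρ'₁ μ k T σg I₀ (P.c i) f₀)
    (h₂ : IsModification ρ ρ'₂ μ k T σg I₀ (P.c i) g₀) :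
    ∃ φ : S1 ≃ₜ S1,
      (∀ x ∈ (I₀ : Set S1), φ x = φ₀ x) ∧
      (∀ x : S1, x ∉ gapOrbit σg I₀ → φ x = x) ∧
      (∀ (γ : Γ) (x : S1), φ (ρ'₁ γ x) = ρ'₂ γ (φ x)) := by
  have G : IsGapConjugacy σg I₀ ρ'₁ ρ'₂ φ₀ (P.c i) :=
    { image₁ := fun γ => h₁.rep'.gapAct γ I₀
      image₂ := fun γ => h₂.rep'.gapAct γ I₀
      stab := hstab
      mapsTo := hφ₀bij.mapsTo
      conj := fun x hx => by rw [h₁.on_gap x hx, hconj x hx, h₂.on_gap _ (hφ₀bij.mapsTo hx)] }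
  have hoff : ∀ γ x, x ∉ gapOrbit σg I₀ → ρ'₁ γ x = ρ'₂ γ x := fun γ x hx =>
    (h₁.eq_off γ x hx).trans (h₂.eq_off γ x hx).symm
  have hμ : ∀ γ, ∀ x ∈ μ, ρ'₁ γ x = ρ'₂ γ x := fun γ x hx =>
    hoff γ x (notMem_gapOrbit_of_mem σg I₀ hx)
  obtain ⟨a, ha, b, hb, c, hc, hac, hbac⟩ :=
    exists_mem_oArc_of_perfect h₁.rep'.perfect h₁.rep'.nonempty
  have hsame : ∀ γ, SameOrientation (ρ'₁ γ) (ρ'₂ γ) := fun γ =>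
    sameOrientation_of_eq (h₁.rep'.orient γ) (h₂.rep'.orient γ) hac hbac
      (hμ γ a ha) (hμ γ b hb) (hμ γ c hc)
  have hcont := G.continuous_gapExtension hφ₀bij hφ₀cont hφ₀orient hsame
    (notMem_gapOrbit_of_mem σg I₀ ha) (notMem_gapOrbit_of_mem σg I₀ hc) hac
  exact ⟨hcont.homeoOfEquivCompactToT2 (f := Equiv.ofBijective _ (G.bijective_gapExtension hφ₀bij)),
    fun x hx => G.gapExtension_eq_of_mem hx, fun x hx => gapExtension_of_notMem hx,
    G.gapExtension_apply hoff⟩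

open PAFlow in
/-- modifications by topologically conjugate gap maps are topologically
conjugate, by a conjugacy extending the given one on the gap and equal to the identity off
the orbit `𝔍` of the gap. -/
theorem statement2 {Γ : Type} [Group Γ] (P : OrbifoldPresentation Γ)
    (ρ : Γ →* (S1 ≃ₜ S1)) (μ : Set S1) (k : ℕ)
    (T : TauData μ k) (σg : Γ →* Equiv.Perm (Gap μ))
    (hrep : IsMTSRep ρ μ k T σg)
    (I₀ : Gap μ) (hper : gapStab σg I₀ ≠ ⊥)
    (i : Fin P.q) (hstab : gapStab σg I₀ = Subgroup.zpowers (P.c i))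
    (f₀ g₀ : S1 → S1)
    (hf₀ : IsClosureHomeo f₀ (I₀ : Set S1)) (hg₀ : IsClosureHomeo g₀ (I₀ : Set S1))
    (hbdf : ∀ x ∈ frontier (I₀ : Set S1), f₀ x = ρ (P.c i) x)
    (hbdg : ∀ x ∈ frontier (I₀ : Set S1), g₀ x = ρ (P.c i) x)
    (φ₀ : S1 → S1)
    (hφ₀cont : ContinuousOn φ₀ (I₀ : Set S1))
    (hφ₀bij : Set.BijOn φ₀ (I₀ : Set S1) (I₀ : Set S1))
    (hφ₀orient : ∀ x ∈ (I₀ : Set S1), ∀ y ∈ (I₀ : Set S1), ∀ z ∈ (I₀ : Set S1),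
      y ∈ oArc x z → φ₀ y ∈ oArc (φ₀ x) (φ₀ z))
    (hconj : ∀ x ∈ (I₀ : Set S1), φ₀ (f₀ x) = g₀ (φ₀ x))
    (ρ'₁ ρ'₂ : Γ →* (S1 ≃ₜ S1))
    (h₁ : IsModification ρ ρ'₁ μ k T σg I₀ (P.c i) f₀)
    (h₂ : IsModification ρ ρ'₂ μ k T σg I₀ (P.c i) g₀) :
    ∃ φ : S1 ≃ₜ S1,
      (∀ x ∈ (I₀ : Set S1), φ x = φ₀ x) ∧
      (∀ x : S1, x ∉ gapOrbit σg I₀ → φ x = x) ∧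
      (∀ (γ : Γ) (x : S1), φ (ρ'₁ γ x) = ρ'₂ γ (φ x)) :=
  statement2_general P ρ μ k T σg I₀ i hstab f₀ g₀ φ₀ hφ₀cont hφ₀bij hφ₀orient hconj ρ'₁ ρ'₂ h₁ h₂
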